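/- A 1-dimensional simplicial complex is shellable if and only if it has at most one connected component with more than one vertex. -/

import Mathlib

open Finset

variable {V : Type*} [DecidableEq V]

/-- A (finite abstract) simplicial complex: a finset of finsets closed under subsets. -/
def IsComplex (K : Finset (Finset V)) : Prop :=
  ∀ F ∈ K, ∀ G ⊆ F, G ∈ K

/-- The facets (maximal faces) of a complex. -/
def facets (K : Finset (Finset V)) : Finset (Finset V) := by
  classical exact K.filter (fun F => ∀ G ∈ K, F ⊆ G → F = G)

/-- `L` is a shelling order of the facets of `K`: for each `i ≥ 2` (0-indexed `i ≥ 1`),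
the intersection of the closed simplex on `F_i` with the union of the previous closed simplices
is pure of dimension `dim F_i - 1`: every face `G` of the intersection is contained in a face `H`
of the intersection with `H.card = F_i.card - 1`. -/
def IsShelling (K : Finset (Finset V)) (L : List (Finset V)) : Prop :=
  L.Nodup ∧ L.toFinset = facets K ∧
  ∀ i : Fin L.length, i.1 ≠ 0 → ∀ G ⊆ L.get i,
    (∃ j : Fin L.length, j < i ∧ G ⊆ L.get j) →
    ∃ H, G ⊆ H ∧ H ⊆ L.get i ∧ H.card + 1 = (L.get i).card ∧
      ∃ j : Fin L.length, j < i ∧ H ⊆ L.get j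

/-- A complex is shellable if it admits a shelling order of its facets. -/
def Shellable (K : Finset (Finset V)) : Prop := ∃ L, IsShelling K L

/-- The subcomplex of `K` induced by a vertex subset `U`. -/
def inducedSub (K : Finset (Finset V)) (U : Finset V) : Finset (Finset V) :=
  K.filter (fun F => F ⊆ U)

/-- The vertex set of a complex. -/
def verts (K : Finset (Finset V)) : Finset V := K.sup id

/-- The link of a vertex `v` in `K`. -/
def link (K : Finset (Finset V)) (v : V) : Finset (Finset V) :=
  K.filter (fun F => v ∉ F ∧ insert v F ∈ K)

/-- A complex is pure if all of its facets have the same dimension. -/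
def IsPure (K : Finset (Finset V)) : Prop :=
  ∀ F ∈ facets K, ∀ G ∈ facets K, F.card = G.card


lemma facets_subset (K : Finset (Finset V)) : facets K ⊆ K := Finset.filter_subset _ _

lemma mem_facets' {K : Finset (Finset V)} {F : Finset V} :
    F ∈ facets K ↔ F ∈ K ∧ ∀ G ∈ K, F ⊆ G → F = G := by
  classical
  simp [facets]

lemma edge_facet {K : Finset (Finset V)} (hdim : ∀ F ∈ K, F.card ≤ 2)
    {F : Finset V} (hF : F ∈ K) (hc : F.card = 2) : F ∈ facets K :=
  mem_facets'.2 ⟨hF, fun G hG hsub =>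
    Finset.eq_of_subset_of_card_le hsub (by rw [hc]; exact hdim G hG)⟩

lemma extend_lemma {K : Finset (Finset V)} (_hK : IsComplex K)
    (hcon : ∀ x y : V, (∃ e ∈ K, e.card = 2 ∧ x ∈ e) → (∃ e ∈ K, e.card = 2 ∧ y ∈ e) →
        Relation.ReflTransGen (fun u w => u ≠ w ∧ ({u, w} : Finset V) ∈ K) x y)
    {A B : Finset (Finset V)}
    (hAB : ∀ e ∈ K, e.card = 2 → e ∈ A ∨ e ∈ B)
    (hA : ∀ e ∈ A, e ∈ K ∧ e.card = 2) (hB : ∀ e ∈ B, e ∈ K ∧ e.card = 2)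
    (hAne : A.Nonempty) (hBne : B.Nonempty) :
    ∃ e ∈ B, ∃ f ∈ A, (e ∩ f).Nonempty := by
  obtain ⟨ea, hea⟩ := hAne
  obtain ⟨eb, heb⟩ := hBne
  obtain ⟨x, hx⟩ := Finset.card_pos.1 (by rw [(hA ea hea).2]; norm_num)
  obtain ⟨y, hy⟩ := Finset.card_pos.1 (by rw [(hB eb heb).2]; norm_num)
  have h := hcon x y ⟨ea, (hA ea hea).1, (hA ea hea).2, hx⟩ ⟨eb, (hB eb heb).1, (hB eb heb).2, hy⟩
  have key : ∀ z, Relation.ReflTransGen (fun u w => u ≠ w ∧ ({u, w} : Finset V) ∈ K) x z →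
      (∃ f ∈ A, z ∈ f) ∨ (∃ e ∈ B, ∃ f ∈ A, (e ∩ f).Nonempty) := by
    intro z hz
    induction hz with
    | refl => exact Or.inl ⟨ea, hea, hx⟩
    | @tail b c _ hbc ih =>
      rcases ih with ⟨f, hf, hbf⟩ | done
      · have hedge : ({b, c} : Finset V) ∈ K := hbc.2
        have hcard : ({b, c} : Finset V).card = 2 := Finset.card_pair hbc.1
        rcases hAB _ hedge hcard with hA' | hB'
        · exact Or.inl ⟨{b, c}, hA', by simp⟩
        · exact Or.inr ⟨{b, c}, hB', f, hf, ⟨b, Finset.mem_inter.2 ⟨by simp, hbf⟩⟩⟩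
      · exact Or.inr done
  rcases key y h with ⟨f, hf, hyf⟩ | done
  · exact ⟨eb, heb, f, hf, ⟨y, Finset.mem_inter.2 ⟨hy, hyf⟩⟩⟩
  · exact done

lemma build_lemma {K : Finset (Finset V)} (hK : IsComplex K)
    (hcon : ∀ x y : V, (∃ e ∈ K, e.card = 2 ∧ x ∈ e) → (∃ e ∈ K, e.card = 2 ∧ y ∈ e) →
        Relation.ReflTransGen (fun u w => u ≠ w ∧ ({u, w} : Finset V) ∈ K) x y)
    {E : Finset (Finset V)} (hE : ∀ e, e ∈ E ↔ e ∈ K ∧ e.card = 2) :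
    ∀ n (L : List (Finset V)), L ≠ [] → L.Nodup → (∀ e ∈ L, e ∈ E) →
    (∀ i : Fin L.length, i.1 ≠ 0 → ∃ j : Fin L.length, j.1 < i.1 ∧ (L.get i ∩ L.get j).Nonempty) →
    (E \ L.toFinset).card = n →
    ∃ L' : List (Finset V), L' ≠ [] ∧ L'.Nodup ∧ L'.toFinset = E ∧
      (∀ i : Fin L'.length, i.1 ≠ 0 →
        ∃ j : Fin L'.length, j.1 < i.1 ∧ (L'.get i ∩ L'.get j).Nonempty) := by
  intro n
  induction n with
  | zero =>
    intro L hne hnd hsub hinv hcard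
    refine ⟨L, hne, hnd, ?_, hinv⟩
    apply Finset.Subset.antisymm
    · intro e he; exact hsub e (List.mem_toFinset.1 he)
    · exact Finset.sdiff_eq_empty_iff_subset.1 (Finset.card_eq_zero.1 hcard)
  | succ n ih =>
    intro L hne hnd hsub hinv hcard
    have hBne : (E \ L.toFinset).Nonempty := Finset.card_pos.1 (by omega)
    have hAne : L.toFinset.Nonempty := by
      cases L with
      | nil => exact absurd rfl hne
      | cons a l => exact ⟨a, by simp⟩
    obtain ⟨e, he, f, hf, hef⟩ := extend_lemma hK hcon
      (A := L.toFinset) (B := E \ L.toFinset)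
      (fun g hg hc => by
        by_cases h : g ∈ L.toFinset
        · exact Or.inl h
        · exact Or.inr (Finset.mem_sdiff.2 ⟨(hE g).2 ⟨hg, hc⟩, h⟩))
      (fun g hg => (hE g).1 (hsub g (List.mem_toFinset.1 hg)))
      (fun g hg => (hE g).1 (Finset.mem_sdiff.1 hg).1)
      hAne hBne
    have heE : e ∈ E := (Finset.mem_sdiff.1 he).1
    have heL : e ∉ L.toFinset := (Finset.mem_sdiff.1 he).2
    have hlen : (L ++ [e]).length = L.length + 1 := by simp
    have hget_lt : ∀ (k : ℕ) (h : k < L.length) (h2 : k < (L ++ [e]).length),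
        (L ++ [e]).get ⟨k, h2⟩ = L.get ⟨k, h⟩ := by
      intro k h h2
      simp [List.getElem_append_left h]
    have hget_last : ∀ (h2 : L.length < (L ++ [e]).length),
        (L ++ [e]).get ⟨L.length, h2⟩ = e := by
      intro h2; simp
    apply ih (L ++ [e])
    · simp
    · exact List.Nodup.append hnd (List.nodup_singleton e)
        (by intro a ha hb; simp at hb; subst hb; exact heL (List.mem_toFinset.2 ha))
    · intro g hg
      rcases List.mem_append.1 hg with h | h
      · exact hsub g h
      · simp at h; subst h; exact heE
    · intro i hi
      have hi2 : i.1 < L.length + 1 := by omega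
      rcases Nat.lt_or_ge i.1 L.length with h | h
      · obtain ⟨j, hj, hshare⟩ := hinv ⟨i.1, h⟩ hi
        have hjlt : j.1 < (L ++ [e]).length := by simp
        refine ⟨⟨j.1, hjlt⟩, hj, ?_⟩
        rw [show i = ⟨i.1, i.2⟩ from rfl]
        rw [hget_lt i.1 h i.2, hget_lt j.1 j.2 hjlt]
        exact hshare
      · have hieq : i.1 = L.length := by omega
        obtain ⟨jf, hjf⟩ := List.mem_iff_get.1 (List.mem_toFinset.1 hf)
        have hjlt : jf.1 < (L ++ [e]).length := by simp
        refine ⟨⟨jf.1, hjlt⟩, by exact lt_of_lt_of_le jf.2 (le_of_eq hieq.symm), ?_⟩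
        have h1 : (L ++ [e]).get i = e := by
          rw [show i = ⟨i.1, i.2⟩ from rfl]
          simp only [hieq]
          exact hget_last _
        have h2 : (L ++ [e]).get ⟨jf.1, hjlt⟩ = f := by
          rw [hget_lt jf.1 jf.2 hjlt]; exact hjf
        rw [h1, h2]; exact hef
    · have : (L ++ [e]).toFinset = insert e L.toFinset := by
        ext x; simp only [List.mem_toFinset, List.mem_append, List.mem_singleton, Finset.mem_insert]; tauto
      rw [this, Finset.sdiff_insert, Finset.card_erase_of_mem]
      · omega
      · exact Finset.mem_sdiff.2 ⟨heE, heL⟩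

lemma shellable_of_conn {K : Finset (Finset V)} (hK : IsComplex K)
    (hdim : (∀ F ∈ K, F.card ≤ 2) ∧ ∃ F ∈ K, F.card = 2)
    (hcon : ∀ x y : V, (∃ e ∈ K, e.card = 2 ∧ x ∈ e) → (∃ e ∈ K, e.card = 2 ∧ y ∈ e) →
        Relation.ReflTransGen (fun u w => u ≠ w ∧ ({u, w} : Finset V) ∈ K) x y) :
    Shellable K := by
  classical
  set E := K.filter (fun F => F.card = 2) with hEdef
  have hE : ∀ e, e ∈ E ↔ e ∈ K ∧ e.card = 2 := fun e => by simp [hEdef]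
  obtain ⟨F0, hF0K, hF0c⟩ := hdim.2
  have hF0E : F0 ∈ E := (hE F0).2 ⟨hF0K, hF0c⟩
  obtain ⟨LE, hLEne, hLEnd, hLEfin, hLEinv⟩ := build_lemma hK hcon hE
      (E \ ([F0] : List (Finset V)).toFinset).card [F0]
      (by simp) (by simp) (by simpa using hF0E)
      (fun i hi => absurd (Nat.lt_one_iff.1 (by simpa using i.2)) hi) rfl
  set S := (facets K).filter (fun F => F.card ≠ 2) with hSdef
  have hEfacet : ∀ e ∈ E, e ∈ facets K := fun e he =>
    edge_facet hdim.1 ((hE e).1 he).1 ((hE e).1 he).2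
  have hfacets_eq : facets K = E ∪ S := by
    apply Finset.Subset.antisymm
    · intro x hx
      by_cases h : x.card = 2
      · exact Finset.mem_union_left _ ((hE x).2 ⟨facets_subset K hx, h⟩)
      · exact Finset.mem_union_right _ (Finset.mem_filter.2 ⟨hx, h⟩)
    · intro x hx
      rcases Finset.mem_union.1 hx with h | h
      · exact hEfacet x h
      · exact (Finset.mem_filter.1 h).1
  have hScard : ∀ s ∈ S.toList, s.card ≠ 2 := fun s hs =>
    (Finset.mem_filter.1 (Finset.mem_toList.1 hs)).2
  have hLEcard : ∀ e ∈ LE, e.card = 2 := fun e he =>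
    ((hE e).1 (by rw [← hLEfin]; exact List.mem_toFinset.2 he)).2
  have hnodup : (LE ++ S.toList).Nodup := by
    refine List.Nodup.append hLEnd (Finset.nodup_toList S) ?_
    intro a ha hb
    exact hScard a hb (hLEcard a ha)
  have htofin : (LE ++ S.toList).toFinset = facets K := by
    rw [List.toFinset_append, hLEfin, Finset.toList_toFinset, hfacets_eq]
  refine ⟨LE ++ S.toList, hnodup, htofin, ?_⟩
  intro i hi G hG hprev
  have hgetmem : ∀ j : Fin (LE ++ S.toList).length,
      (LE ++ S.toList).get j ∈ facets K := by
    intro j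
    rw [← htofin]
    exact List.mem_toFinset.2 ((LE ++ S.toList).get_mem j)
  have hFi : (LE ++ S.toList).get i ∈ facets K := hgetmem i
  have hFiK : (LE ++ S.toList).get i ∈ K := facets_subset K hFi
  have hne_prev : ∀ j : Fin (LE ++ S.toList).length, j < i →
      ¬((LE ++ S.toList).get i ⊆ (LE ++ S.toList).get j) := by
    intro j hj hsubij
    have heq : (LE ++ S.toList).get i = (LE ++ S.toList).get j :=
      (mem_facets'.1 hFi).2 _ (facets_subset K (hgetmem j)) hsubij
    have : i = j := (List.Nodup.get_inj_iff hnodup).1 heq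
    exact absurd (this ▸ hj) (lt_irrefl i)
  by_cases hc2 : ((LE ++ S.toList).get i).card = 2
  · rcases Finset.eq_empty_or_nonempty G with hGe | hGne
    · -- G = ∅ : use the LE invariant
      have hilt : i.1 < LE.length := by
        by_contra h
        push_neg at h
        have h2 : i.1 - LE.length < S.toList.length := by
          have hlen : (LE ++ S.toList).length = LE.length + S.toList.length :=
            List.length_append
          have := i.2
          omega
        have : (LE ++ S.toList).get i = S.toList.get ⟨i.1 - LE.length, h2⟩ := by
          simp only [List.get_eq_getElem]
          exact List.getElem_append_right h
        exact hScard _ (S.toList.get_mem _) (this ▸ hc2)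
      have hgeti : (LE ++ S.toList).get i = LE.get ⟨i.1, hilt⟩ := by
        simp only [List.get_eq_getElem]
        exact List.getElem_append_left hilt
      obtain ⟨j, hj, hshare⟩ := hLEinv ⟨i.1, hilt⟩ hi
      obtain ⟨w, hw⟩ := hshare
      have hjL : j.1 < (LE ++ S.toList).length := by
        rw [List.length_append]; omega
      have hgetj : (LE ++ S.toList).get ⟨j.1, hjL⟩ = LE.get j := by
        simp only [List.get_eq_getElem]
        exact List.getElem_append_left j.2
      refine ⟨{w}, by simp [hGe], ?_, by rw [Finset.card_singleton, hc2], ⟨j.1, hjL⟩, ?_, ?_⟩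
      · rw [hgeti]
        exact Finset.singleton_subset_iff.2 (Finset.mem_inter.1 hw).1
      · exact show j.1 < i.1 from hj
      · rw [hgetj]
        exact Finset.singleton_subset_iff.2 (Finset.mem_inter.1 hw).2
    · obtain ⟨j', hj', hGj'⟩ := hprev
      have hGcard : G.card ≤ 2 := hc2 ▸ Finset.card_le_card hG
      have hG1 : G.card = 1 ∨ G.card = 2 := by
        have := Finset.card_pos.2 hGne; omega
      rcases hG1 with h1 | h2
      · exact ⟨G, Finset.Subset.rfl, hG, by rw [h1, hc2], j', hj', hGj'⟩
      · exfalso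
        have : G = (LE ++ S.toList).get i :=
          Finset.eq_of_subset_of_card_le hG (by omega)
        exact hne_prev j' hj' (this ▸ hGj')
  · -- card ≤ 1
    have hcle : ((LE ++ S.toList).get i).card ≤ 2 := hdim.1 _ hFiK
    have hc0 : ((LE ++ S.toList).get i).card ≠ 0 := by
      intro h
      have he : (LE ++ S.toList).get i = ∅ := Finset.card_eq_zero.1 h
      have := (mem_facets'.1 hFi).2 F0 hF0K (he ▸ Finset.empty_subset F0)
      rw [he] at this
      rw [← this] at hF0c
      simp at hF0c
    have hc1 : ((LE ++ S.toList).get i).card = 1 := by omega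
    obtain ⟨v, hv⟩ := Finset.card_eq_one.1 hc1
    obtain ⟨j', hj', hGj'⟩ := hprev
    rcases Finset.subset_singleton_iff.1 (hv ▸ hG) with hGe | hGv
    · exact ⟨∅, by simp [hGe], Finset.empty_subset _,
        by rw [Finset.card_empty, hc1], j', hj', Finset.empty_subset _⟩
    · exfalso
      apply hne_prev j' hj'
      rw [hv, ← hGv]
      exact hGj'

lemma conn_of_shellable {K : Finset (Finset V)} (hK : IsComplex K)
    (hdim : (∀ F ∈ K, F.card ≤ 2) ∧ ∃ F ∈ K, F.card = 2)
    (hs : Shellable K) :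
    ∀ x y : V, (∃ e ∈ K, e.card = 2 ∧ x ∈ e) → (∃ e ∈ K, e.card = 2 ∧ y ∈ e) →
        Relation.ReflTransGen (fun u w => u ≠ w ∧ ({u, w} : Finset V) ∈ K) x y := by
  classical
  obtain ⟨L, hnd, hfin, hshell⟩ := hs
  obtain ⟨F0, hF0K, hF0c⟩ := hdim.2
  have hF0f : F0 ∈ facets K := edge_facet hdim.1 hF0K hF0c
  have hF0L : F0 ∈ L := List.mem_toFinset.1 (hfin ▸ hF0f)
  obtain ⟨i0, hi0⟩ := List.mem_iff_get.1 hF0L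
  have hlen0 : 0 < L.length := Nat.lt_of_le_of_lt (Nat.zero_le _) i0.2
  have hgetfacet : ∀ j : Fin L.length, L.get j ∈ facets K := by
    intro j
    rw [← hfin]
    exact List.mem_toFinset.2 (L.get_mem j)
  have hgetK : ∀ j : Fin L.length, L.get j ∈ K := fun j => facets_subset K (hgetfacet j)
  have same_edge : ∀ T ∈ K, T.card = 2 → ∀ x ∈ T, ∀ y ∈ T,
      Relation.ReflTransGen (fun u w => u ≠ w ∧ ({u, w} : Finset V) ∈ K) x y := by
    intro T hT _ x hx y hy
    by_cases hxy : x = y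
    · subst hxy; exact Relation.ReflTransGen.refl
    · exact Relation.ReflTransGen.single ⟨hxy,
        hK T hT {x, y} (Finset.insert_subset hx (Finset.singleton_subset_iff.2 hy))⟩
  have h0card : (L.get ⟨0, hlen0⟩).card = 2 := by
    by_contra h0
    have hex : ∃ n, ∃ h : n < L.length, (L.get ⟨n, h⟩).card = 2 :=
      ⟨i0.1, i0.2, by rw [show L.get ⟨i0.1, i0.2⟩ = F0 from hi0]; exact hF0c⟩
    obtain ⟨hn, hcn⟩ := Nat.find_spec hex
    have hnne : Nat.find hex ≠ 0 := by
      intro h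
      apply h0
      have : (⟨Nat.find hex, hn⟩ : Fin L.length) = ⟨0, hlen0⟩ := Fin.ext h
      rw [this] at hcn
      exact hcn
    obtain ⟨H, -, hHi, hHc, j, hj, hHj⟩ := hshell ⟨Nat.find hex, hn⟩ hnne ∅
      (Finset.empty_subset _)
      ⟨⟨0, hlen0⟩, Fin.mk_lt_mk.2 (Nat.pos_of_ne_zero hnne), Finset.empty_subset _⟩
    have hH1 : H.card = 1 := by omega
    have hjne2 : (L.get j).card ≠ 2 := fun hc => Nat.find_min hex hj ⟨j.2, hc⟩
    have hjle : H.card ≤ (L.get j).card := Finset.card_le_card hHj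
    have hjle2 : (L.get j).card ≤ 2 := hdim.1 _ (hgetK j)
    have hj1 : (L.get j).card = 1 := by omega
    have hjeq : L.get j = H := (Finset.eq_of_subset_of_card_le hHj (by omega)).symm
    have := (mem_facets'.1 (hgetfacet j)).2 (L.get ⟨Nat.find hex, hn⟩)
      (hgetK _) (hjeq ▸ hHi)
    rw [this] at hj1
    omega
  have claim : ∀ m : ℕ, ∀ h : m < L.length, (L.get ⟨m, h⟩).card = 2 →
      ∀ x ∈ L.get ⟨m, h⟩, ∀ y ∈ L.get ⟨0, hlen0⟩,
        Relation.ReflTransGen (fun u w => u ≠ w ∧ ({u, w} : Finset V) ∈ K) x y := by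
    intro m
    induction m using Nat.strong_induction_on with
    | _ m ih =>
      intro h hc x hx y hy
      by_cases hm : m = 0
      · subst hm
        exact same_edge _ (hgetK ⟨0, h⟩) hc x hx y hy
      · obtain ⟨H, -, hHi, hHc, j, hj, hHj⟩ := hshell ⟨m, h⟩ hm ∅
          (Finset.empty_subset _)
          ⟨⟨0, hlen0⟩, Fin.mk_lt_mk.2 (Nat.pos_of_ne_zero hm), Finset.empty_subset _⟩
        have hH1 : H.card = 1 := by omega
        obtain ⟨w, hw⟩ := Finset.card_eq_one.1 hH1
        subst hw
        have hwi : w ∈ L.get ⟨m, h⟩ := hHi (Finset.mem_singleton_self w)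
        have hwj : w ∈ L.get j := hHj (Finset.mem_singleton_self w)
        have hjle2 : (L.get j).card ≤ 2 := hdim.1 _ (hgetK j)
        have hcj2 : (L.get j).card = 2 := by
          rcases Nat.lt_or_ge (L.get j).card 2 with hlt | hge
          · exfalso
            have hjge : 1 ≤ (L.get j).card :=
              Finset.card_le_card (Finset.singleton_subset_iff.2 hwj) |>.trans_eq' (by simp)
            have hj1 : (L.get j).card = 1 := by omega
            have hjeq : L.get j = {w} :=
              (Finset.eq_of_subset_of_card_le (Finset.singleton_subset_iff.2 hwj)
                (by omega)).symm
            have := (mem_facets'.1 (hgetfacet j)).2 (L.get ⟨m, h⟩)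
              (hgetK _) (hjeq ▸ hHi)
            rw [this] at hj1
            omega
          · omega
        have h1 := ih j.1 hj j.2 hcj2 w hwj y hy
        exact (same_edge _ (hgetK ⟨m, h⟩) hc x hx w hwi).trans h1
  have hsymm : Symmetric (fun u w => u ≠ w ∧ ({u, w} : Finset V) ∈ K) := by
    intro a b ⟨hne, hm⟩
    exact ⟨hne.symm, by rwa [Finset.pair_comm]⟩
  intro x y hx hy
  obtain ⟨ex, hexK, hexc, hxex⟩ := hx
  obtain ⟨ey, heyK, heyc, hyey⟩ := hy
  obtain ⟨ix, hix⟩ := List.mem_iff_get.1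
    (List.mem_toFinset.1 (hfin ▸ edge_facet hdim.1 hexK hexc))
  obtain ⟨iy, hiy⟩ := List.mem_iff_get.1
    (List.mem_toFinset.1 (hfin ▸ edge_facet hdim.1 heyK heyc))
  obtain ⟨y0, hy0⟩ := Finset.card_pos.1 (by rw [h0card]; norm_num)
  have hx0 := claim ix.1 ix.2 (by rw [show L.get ⟨ix.1, ix.2⟩ = ex from hix]; exact hexc)
    x (by rw [show L.get ⟨ix.1, ix.2⟩ = ex from hix]; exact hxex) y0 hy0
  have hy0' := claim iy.1 iy.2 (by rw [show L.get ⟨iy.1, iy.2⟩ = ey from hiy]; exact heyc)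
    y (by rw [show L.get ⟨iy.1, iy.2⟩ = ey from hiy]; exact hyey) y0 hy0
  exact hx0.trans (by
    haveI : Std.Symm (fun u w : V => u ≠ w ∧ ({u, w} : Finset V) ∈ K) := ⟨fun a b h => hsymm h⟩
    exact Std.Symm.symm _ _ hy0')


/-- A 1-dimensional simplicial complex is shellable iff it has at most one connected
component with more than one vertex, i.e. any two vertices lying in edges are connected. -/
theorem stmt0 (K : Finset (Finset V)) (hK : IsComplex K)
    (hdim : (∀ F ∈ K, F.card ≤ 2) ∧ ∃ F ∈ K, F.card = 2) :
    Shellable K ↔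
      ∀ x y : V, (∃ e ∈ K, e.card = 2 ∧ x ∈ e) → (∃ e ∈ K, e.card = 2 ∧ y ∈ e) →
        Relation.ReflTransGen (fun u w => u ≠ w ∧ ({u, w} : Finset V) ∈ K) x y := by
  exact ⟨conn_of_shellable hK hdim, shellable_of_conn hK hdim⟩
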